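/- arXiv:1412.8011 — 3 statements merged into one kernel-verified Lean document; each statement's English description precedes it below -/
import Mathlib

section
/- Let u : ℝⁿ → ℝ be continuous. Then u is a viscosity subsolution of H(Du) = 0 on ℝⁿ (meaning: for every C¹ function φ : ℝⁿ → ℝ and every local maximum point x₀ of u − φ one has H(Dφ(x₀)) ≤ 0) if and only if u(x) − u(y) ≤ ℓ(x − y) for all x, y ∈ ℝⁿ. -/
/-!
If `u x - u y ≤ ℓ (x - y)`, then a `C¹` function `φ` touching `u` from above at `x₀` satisfies
`Dφ(x₀) v ≤ ℓ v` in every direction (compare slopes along `t ↦ x₀ + t v` for `t < 0`), and a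
point `p` with `⟪p, v⟫ ≤ ℓ v` for all `v` lies in the closed convex set `K`.

Conversely, strict convexity makes the maximiser of `⟪·, v⟫` over `K` unique, hence continuous in
`v ≠ 0`, so `ℓ` is `C¹` away from `0`. For `ε > 0` and `R > ‖x - y‖` the function
`w ↦ u w - ℓ (w - y) - ε / (R - ‖w - y‖)` attains its maximum on the ball `B(y, R)`. At a
maximiser `z ≠ y` the test function `ℓ (w - y) + ε / (R - ‖w - y‖)` would have derivative
`ℓ v + ε ‖v‖ / (R - ‖v‖)² > ℓ v` along `v = z - y`, impossible for a gradient in `K`. So the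
maximum is at `y`, which gives `u x - u y ≤ ℓ (x - y) + ε / (R - ‖x - y‖)`.
-/

open scoped RealInnerProductSpace
open Filter Metric Set Topology

section SupportFunction

variable {E : Type*} [NormedAddCommGroup E] [InnerProductSpace ℝ E] {K : Set E} {ℓ : E → ℝ}

def IsSupportFunction (K : Set E) (ℓ : E → ℝ) : Prop :=
  ∀ v, IsGreatest ((fun p => ⟪p, v⟫) '' K) (ℓ v)

namespace IsSupportFunction

variable (hℓ : IsSupportFunction K ℓ)
include hℓ

theorem inner_le {p : E} (hp : p ∈ K) (v : E) : ⟪p, v⟫ ≤ ℓ v :=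
  (hℓ v).2 ⟨p, hp, rfl⟩

theorem exists_inner_eq (v : E) : ∃ p ∈ K, ⟪p, v⟫ = ℓ v :=
  (hℓ v).1

theorem map_zero : ℓ 0 = 0 := by
  obtain ⟨p, -, hp⟩ := hℓ.exists_inner_eq 0
  rw [← hp, inner_zero_right]

theorem map_smul_of_nonneg {c : ℝ} (hc : 0 ≤ c) (v : E) : ℓ (c • v) = c * ℓ v := by
  obtain ⟨p, hpK, hp⟩ := hℓ.exists_inner_eq (c • v)
  obtain ⟨p', hp'K, hp'⟩ := hℓ.exists_inner_eq v
  refine le_antisymm ?_ ?_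
  · rw [← hp, real_inner_smul_right]
    exact mul_le_mul_of_nonneg_left (hℓ.inner_le hpK v) hc
  · rw [← hp', ← real_inner_smul_right]
    exact hℓ.inner_le hp'K _

theorem continuous (hK : Bornology.IsBounded K) : Continuous ℓ := by
  obtain ⟨C, hC⟩ := hK.exists_norm_le
  refine (LipschitzWith.of_le_add_mul' C fun v w => ?_).continuous
  obtain ⟨p, hpK, hp⟩ := hℓ.exists_inner_eq v
  calc ℓ v = ⟪p, w⟫ + ⟪p, v - w⟫ := by rw [← hp, ← inner_add_right, add_sub_cancel]
    _ ≤ ℓ w + C * dist v w := by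
      rw [dist_eq_norm]
      gcongr
      · exact hℓ.inner_le hpK w
      · exact (real_inner_le_norm p _).trans
          (mul_le_mul_of_nonneg_right (hC p hpK) (norm_nonneg _))

theorem mem_of_forall_inner_le [CompleteSpace E] (hK : IsClosed K) (hKc : Convex ℝ K) {p : E}
    (hp : ∀ v, ⟪p, v⟫ ≤ ℓ v) : p ∈ K := by
  by_contra hpK
  obtain ⟨f, s, hfK, hfp⟩ := geometric_hahn_banach_closed_point hKc hK hpK
  set v := (InnerProductSpace.toDual ℝ E).symm f
  have hf : ∀ a, f a = ⟪a, v⟫ := fun a => by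
    rw [real_inner_comm, InnerProductSpace.toDual_symm_apply]
  obtain ⟨q, hqK, hq⟩ := hℓ.exists_inner_eq v
  have hqs := hfK q hqK
  rw [hf] at hqs hfp
  linarith [hp v]

theorem eq_of_inner_eq (hKc : StrictConvex ℝ K) {v p q : E} (hv : v ≠ 0) (hp : p ∈ K) (hq : q ∈ K)
    (hpv : ⟪p, v⟫ = ℓ v) (hqv : ⟪q, v⟫ = ℓ v) : p = q := by
  by_contra hpq
  -- The midpoint is an interior point of `K` at which the linear form `⟪v, ·⟫` is maximal.
  have hm := hKc hp hq hpq one_half_pos one_half_pos (add_halves 1)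
  have hmax : IsLocalMax (fun w => ⟪v, w⟫) ((1 / 2 : ℝ) • p + (1 / 2 : ℝ) • q) := by
    filter_upwards [mem_interior_iff_mem_nhds.1 hm] with w hw
    rw [inner_add_right, real_inner_smul_right, real_inner_smul_right, real_inner_comm p v,
      real_inner_comm q v, hpv, hqv, real_inner_comm w v]
    linarith [hℓ.inner_le hw v]
  have h0 := congr($(hmax.hasFDerivAt_eq_zero ((innerSL ℝ v).hasFDerivAt)) v)
  exact hv (by simpa using h0)

theorem continuousAt_of_inner_eq (hK : IsCompact K) (hKc : StrictConvex ℝ K) {q : E → E}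
    (hqK : ∀ w, q w ∈ K) (hq : ∀ w, ⟪q w, w⟫ = ℓ w) {v : E} (hv : v ≠ 0) : ContinuousAt q v := by
  refine hK.tendsto_nhds_of_unique_mapClusterPt (.of_forall hqK) fun p hpK hp =>
    hℓ.eq_of_inner_eq hKc hv hpK (hqK v) ?_ (hq v)
  obtain ⟨U, hUv, hUq⟩ := mapClusterPt_iff_ultrafilter.1 hp
  have hU : Tendsto (fun w => ⟪q w, w⟫) U (𝓝 ⟪p, v⟫) := hUq.inner (tendsto_id.mono_right hUv)
  simp only [hq] at hU
  exact tendsto_nhds_unique hU (((hℓ.continuous hK.isBounded).tendsto v).mono_left hUv)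

theorem hasFDerivAt_of_continuousAt {q : E → E} (hqK : ∀ w, q w ∈ K) (hq : ∀ w, ⟪q w, w⟫ = ℓ w)
    {v : E} (hqv : ContinuousAt q v) : HasFDerivAt ℓ (innerSL ℝ (q v)) v := by
  have hbound : ∀ w, ‖ℓ w - ℓ v - ⟪q v, w - v⟫‖ ≤ ‖q w - q v‖ * ‖w - v‖ := by
    intro w
    have h1 := hℓ.inner_le (hqK v) w
    have h2 := hℓ.inner_le (hqK w) v
    have h3 := real_inner_le_norm (q w - q v) (w - v)
    simp only [inner_sub_left, inner_sub_right, hq] at h3 ⊢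
    rw [Real.norm_eq_abs, abs_le]
    constructor <;> linarith
  refine .of_isLittleO (Asymptotics.isLittleO_iff.2 fun c hc => ?_)
  filter_upwards [(tendsto_iff_norm_sub_tendsto_zero.1 hqv).eventually (ge_mem_nhds hc)] with w hw
  exact (hbound w).trans (by gcongr)

theorem contDiffAt (hK : IsCompact K) (hKc : StrictConvex ℝ K) {v : E} (hv : v ≠ 0) :
    ContDiffAt ℝ 1 ℓ v := by
  choose q hqK hq using hℓ.exists_inner_eq
  have hqc : ∀ w ≠ 0, ContinuousAt q w := fun w hw =>
    hℓ.continuousAt_of_inner_eq hK hKc hqK hq hw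
  refine contDiffAt_one_iff.2 ⟨fun w => innerSL ℝ (q w), {w | w ≠ 0}, isOpen_ne.mem_nhds hv,
    fun w hw => ((innerSL ℝ).continuous.continuousAt.comp (hqc w hw)).continuousWithinAt,
    fun w hw => hℓ.hasFDerivAt_of_continuousAt hqK hq (hqc w hw)⟩

theorem fderiv_apply_le_of_sub_le {u φ : E → ℝ} (hu : ∀ x y, u x - u y ≤ ℓ (x - y)) {x₀ : E}
    (hφ : DifferentiableAt ℝ φ x₀) (hmax : IsLocalMax (fun x => u x - φ x) x₀) (v : E) :
    fderiv ℝ φ x₀ v ≤ ℓ v := by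
  have hslope := (hasLineDerivAt_iff_tendsto_slope_zero.1
    (hφ.hasFDerivAt.hasLineDerivAt v)).mono_left (nhdsLT_le_nhdsNE 0)
  refine le_of_tendsto hslope ?_
  have hline : Tendsto (fun t : ℝ => x₀ + t • v) (𝓝[<] 0) (𝓝 x₀) := by
    refine tendsto_nhdsWithin_of_tendsto_nhds ?_
    exact (by fun_prop : Continuous fun t : ℝ => x₀ + t • v).tendsto' 0 x₀ (by simp)
  filter_upwards [hline.eventually hmax, self_mem_nhdsWithin] with t ht (htneg : t < 0)
  have hut := hu x₀ (x₀ + t • v)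
  rw [show x₀ - (x₀ + t • v) = (-t) • v by module, hℓ.map_smul_of_nonneg (by linarith)] at hut
  rw [smul_eq_mul, inv_mul_eq_div, div_le_iff_of_neg htneg]
  linarith

end IsSupportFunction

end SupportFunction

theorem exists_isMaxOn_ball_sub_div_dist {X : Type*} [PseudoMetricSpace X] [ProperSpace X]
    {h : X → ℝ} {y : X} {R ε : ℝ} (hR : 0 < R) (hε : 0 < ε)
    (hh : ContinuousOn h (closedBall y R)) :
    ∃ z ∈ ball y R, IsMaxOn (fun w => h w - ε / (R - dist w y)) (ball y R) z := by
  obtain ⟨M, hM⟩ := (isCompact_closedBall y R).bddAbove_image hh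
  have hMy : h y ≤ M := hM ⟨y, mem_closedBall_self hR.le, rfl⟩
  -- Within distance `ε / c` of the sphere the barrier term exceeds `c`, pushing the function
  -- below its value at the centre.
  set c := M - h y + ε / R
  have hc : ε / R ≤ c := by linarith
  have hc0 : 0 < c := (div_pos hε hR).trans_le hc
  set r := R - ε / c
  have hr : 0 ≤ r := by
    rw [sub_nonneg, div_le_iff₀ hc0, mul_comm, ← div_le_iff₀ hR]
    exact hc
  have hrR : r < R := sub_lt_self R (div_pos hε hc0)
  have hout : ∀ w ∈ ball y R, r < dist w y →
      h w - ε / (R - dist w y) < h y - ε / (R - dist y y) := by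
    intro w hw hwr
    have hd : 0 < R - dist w y := sub_pos.2 hw
    have hbarrier : c < ε / (R - dist w y) := by
      rw [lt_div_iff₀ hd, ← lt_div_iff₀' hc0]
      linarith
    have hhw : h w ≤ M := hM ⟨w, ball_subset_closedBall hw, rfl⟩
    rw [dist_self, sub_zero]
    linarith
  have hcont : ContinuousOn (fun w => h w - ε / (R - dist w y)) (closedBall y r) :=
    (hh.mono (closedBall_subset_closedBall hrR.le)).sub (continuousOn_const.div
      (continuousOn_const.sub (continuous_id.dist continuous_const).continuousOn)
      fun w hw => (sub_pos.2 (lt_of_le_of_lt hw hrR)).ne')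
  obtain ⟨z, hz, hzmax⟩ :=
    (isCompact_closedBall y r).exists_isMaxOn ⟨y, mem_closedBall_self hr⟩ hcont
  refine ⟨z, closedBall_subset_ball hrR hz, fun w hw => ?_⟩
  by_cases hwr : dist w y ≤ r
  · exact hzmax hwr
  · exact (hout w hw (not_le.1 hwr)).le.trans (hzmax (mem_closedBall_self hr))

theorem exists_contDiff_eventuallyEq_of_contDiffAt {E F : Type*} [NormedAddCommGroup E]
    [NormedSpace ℝ E] [HasContDiffBump E] [NormedAddCommGroup F] [NormedSpace ℝ F]
    {f : E → F} {z : E} {n : ℕ} (hf : ContDiffAt ℝ n f z) :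
    ∃ φ : E → F, ContDiff ℝ n φ ∧ φ =ᶠ[𝓝 z] f := by
  obtain ⟨u, hu, hfu⟩ := hf.contDiffOn le_rfl (by simp)
  obtain ⟨ρ, hρ, hρu⟩ := Metric.mem_nhds_iff.1 hu
  let χ : ContDiffBump z := ⟨ρ / 4, ρ / 2, by positivity, by linarith⟩
  refine ⟨fun w => χ w • f w, contDiff_iff_contDiffAt.2 fun w => ?_, ?_⟩
  · by_cases hw : w ∈ ball z ρ
    · exact χ.contDiff.contDiffAt.smul
        (hfu.contDiffAt (mem_of_superset (isOpen_ball.mem_nhds hw) hρu))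
    · have hχw : w ∉ tsupport χ := by
        rw [χ.tsupport_eq]
        exact fun h => hw (closedBall_subset_ball (half_lt_self hρ) h)
      refine (contDiffAt_const (c := (0 : F))).congr_of_eventuallyEq ?_
      filter_upwards [notMem_tsupport_iff_eventuallyEq.1 hχw] with w' hw'
      simp [hw']
  · filter_upwards [χ.eventuallyEq_one] with w hw
    simp [hw]

section Viscosity

variable {E : Type*} [NormedAddCommGroup E] [InnerProductSpace ℝ E] [CompleteSpace E]
  {H ℓ u : E → ℝ}

def IsViscositySubsolution (H u : E → ℝ) : Prop :=
  ∀ φ : E → ℝ, ContDiff ℝ 1 φ → ∀ x₀, IsLocalMax (fun x => u x - φ x) x₀ → H (gradient φ x₀) ≤ 0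

theorem isViscositySubsolution_of_sub_le (hK : IsClosed {p | H p ≤ 0})
    (hKc : Convex ℝ {p | H p ≤ 0}) (hℓ : IsSupportFunction {p | H p ≤ 0} ℓ)
    (hu : ∀ x y, u x - u y ≤ ℓ (x - y)) : IsViscositySubsolution H u := by
  intro φ hφ x₀ hmax
  refine hℓ.mem_of_forall_inner_le hK hKc fun v => ?_
  rw [inner_gradient_left]
  exact hℓ.fderiv_apply_le_of_sub_le hu (hφ.differentiable one_ne_zero).differentiableAt hmax v

namespace IsViscositySubsolution

variable (hsub : IsViscositySubsolution H u) (hℓ : IsSupportFunction {p | H p ≤ 0} ℓ)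
include hsub hℓ

theorem fderiv_apply_le {f : E → ℝ} {z : E} (hf : ContDiffAt ℝ 1 f z)
    (hmax : IsLocalMax (fun x => u x - f x) z) (v : E) : fderiv ℝ f z v ≤ ℓ v := by
  obtain ⟨φ, hφ, hφf⟩ := exists_contDiff_eventuallyEq_of_contDiffAt (n := 1) (by simpa using hf)
  have hgrad : gradient φ z = gradient f z := by rw [gradient, gradient, hφf.fderiv_eq]
  have hH : H (gradient f z) ≤ 0 := hgrad ▸ hsub φ (by simpa using hφ) z
    (hmax.congr (hφf.mono fun w hw => by simp only [hw]))
  rw [← inner_gradient_left]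
  exact hℓ.inner_le hH v

theorem not_isLocalMax_sub_add_div (hK : IsCompact {p | H p ≤ 0})
    (hKc : StrictConvex ℝ {p | H p ≤ 0}) {y z : E} {R ε : ℝ} (hε : 0 < ε) (hzy : z ≠ y)
    (hzR : ‖z - y‖ < R) : ¬ IsLocalMax (fun w => u w - (ℓ (w - y) + ε / (R - ‖w - y‖))) z := by
  intro hmax
  set v := z - y
  have hv : v ≠ 0 := sub_ne_zero.2 hzy
  have hvR : 0 < R - ‖v‖ := sub_pos.2 hzR
  have hf : ContDiffAt ℝ 1 (fun w => ℓ (w - y) + ε / (R - ‖w - y‖)) z :=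
    ((hℓ.contDiffAt hK hKc hv).comp z (contDiffAt_id.sub contDiffAt_const)).add
      (contDiffAt_const.div (contDiffAt_const.sub
        ((contDiffAt_id.sub contDiffAt_const).norm ℝ hv)) hvR.ne')
  -- On the ray from `y` through `z` the test function is explicit, by homogeneity of `ℓ`.
  have hline : HasLineDerivAt ℝ (fun w => ℓ (w - y) + ε / (R - ‖w - y‖))
      (ℓ v + ε * ‖v‖ / (R - ‖v‖) ^ 2) z v := by
    have h1 : HasDerivAt (fun t : ℝ => 1 + t) 1 0 := (hasDerivAt_id 0).const_add 1
    have hden := (h1.mul_const ‖v‖).const_sub R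
    refine (((h1.mul_const (ℓ v)).add ((hasDerivAt_const 0 ε).div hden
      (by simpa using hvR.ne'))).congr_deriv (by simp)).congr_of_eventuallyEq ?_
    filter_upwards [Ioi_mem_nhds (by norm_num : (-1 : ℝ) < 0)] with t (ht : -1 < t)
    have hray : z + t • v - y = (1 + t) • v := by simp only [v]; module
    rw [hray, hℓ.map_smul_of_nonneg (by linarith), norm_smul, Real.norm_of_nonneg (by linarith)]
    rfl
  have hle := hsub.fderiv_apply_le hℓ hf hmax v
  rw [(hf.differentiableAt_one.hasFDerivAt.hasLineDerivAt v).unique hline] at hle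
  have : 0 < ε * ‖v‖ / (R - ‖v‖) ^ 2 := by
    have := norm_pos_iff.2 hv
    positivity
  linarith

theorem sub_le [FiniteDimensional ℝ E] (hu : Continuous u) (hK : IsCompact {p | H p ≤ 0})
    (hKc : StrictConvex ℝ {p | H p ≤ 0}) (x y : E) : u x - u y ≤ ℓ (x - y) := by
  have hℓc := hℓ.continuous hK.isBounded
  refine le_of_forall_pos_le_add fun ε hε => ?_
  set R := ‖x - y‖ + 1
  have hcont : Continuous fun w => u w - ℓ (w - y) := by fun_prop
  obtain ⟨z, hzR, hzmax⟩ :=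
    exists_isMaxOn_ball_sub_div_dist (y := y) (R := R) (by positivity) hε hcont.continuousOn
  simp only [dist_eq_norm] at hzmax
  have hzy : z = y := by
    by_contra hzy
    refine hsub.not_isLocalMax_sub_add_div hℓ hK hKc hε hzy (mem_ball_iff_norm.1 hzR) ?_
    filter_upwards [isOpen_ball.mem_nhds hzR] with w hw
    linarith [isMaxOn_iff.1 hzmax w hw]
  have hx := isMaxOn_iff.1 hzmax x (mem_ball_iff_norm.2 (lt_add_one ‖x - y‖))
  simp only [hzy, sub_self, norm_zero, hℓ.map_zero, sub_zero] at hx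
  rw [show R - ‖x - y‖ = 1 by ring, div_one] at hx
  have : 0 < ε / R := by positivity
  linarith

end IsViscositySubsolution

end Viscosity

theorem subsolution_iff_ell_lipschitz_general
    {n : ℕ}
    (H ℓ : EuclideanSpace ℝ (Fin n) → ℝ)
    (hKcpt : IsCompact {p : EuclideanSpace ℝ (Fin n) | H p ≤ 0})
    (hKconv : StrictConvex ℝ {p : EuclideanSpace ℝ (Fin n) | H p ≤ 0})
    (hℓ : ∀ v, IsGreatest {r : ℝ | ∃ p, H p ≤ 0 ∧ ⟪p, v⟫ = r} (ℓ v))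
    (u : EuclideanSpace ℝ (Fin n) → ℝ) (hu : Continuous u) :
    (∀ φ : EuclideanSpace ℝ (Fin n) → ℝ, ContDiff ℝ 1 φ →
        ∀ x₀, IsLocalMax (fun x => u x - φ x) x₀ → H (gradient φ x₀) ≤ 0)
      ↔ ∀ x y, u x - u y ≤ ℓ (x - y) :=
  ⟨fun hsub => IsViscositySubsolution.sub_le hsub hℓ hu hKcpt hKconv,
    isViscositySubsolution_of_sub_le hKcpt.isClosed hKconv.convex hℓ⟩

/-- A continuous `u : ℝⁿ → ℝ` is a viscosity subsolution of `H(Du) = 0`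
on `ℝⁿ` if and only if `u x - u y ≤ ℓ (x - y)` for all `x, y`, where `ℓ` is the support
function of the compact strictly convex set `K = {p | H p ≤ 0}`. -/
theorem subsolution_iff_ell_lipschitz
    {n : ℕ} (hn : 0 < n)
    (H ℓ : EuclideanSpace ℝ (Fin n) → ℝ)
    (hH : Continuous H) (hH0 : H 0 < 0)
    (hKcpt : IsCompact {p : EuclideanSpace ℝ (Fin n) | H p ≤ 0})
    (hKconv : StrictConvex ℝ {p : EuclideanSpace ℝ (Fin n) | H p ≤ 0})
    (hℓ : ∀ v, IsGreatest {r : ℝ | ∃ p, H p ≤ 0 ∧ ⟪p, v⟫ = r} (ℓ v))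
    (u : EuclideanSpace ℝ (Fin n) → ℝ) (hu : Continuous u) :
    (∀ φ : EuclideanSpace ℝ (Fin n) → ℝ, ContDiff ℝ 1 φ →
        ∀ x₀, IsLocalMax (fun x => u x - φ x) x₀ → H (gradient φ x₀) ≤ 0)
      ↔ ∀ x y, u x - u y ≤ ℓ (x - y) :=
  subsolution_iff_ell_lipschitz_general H ℓ hKcpt hKconv hℓ u hu
end

section
/- The support function ℓ satisfies: (a) ℓ is a viscosity subsolution of H(Dℓ) = 0 on ℝⁿ (for every C¹ function φ and every local maximum point x₀ of ℓ − φ one has H(Dφ(x₀)) ≤ 0); and (b) at every point x ∈ ℝⁿ at which ℓ is differentiable, ℓ(x) = Dℓ(x)·x and H(Dℓ(x)) = 0, where Dℓ(x) denotes the gradient of ℓ at x. -/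
/-!
If `p ∈ K` maximizes `⟪·, x⟫` on `K`, then `⟪p, ·⟫` is a linear minorant of `ℓ` touching it at `x`,
so every differentiable function touching `ℓ` from above at `x` has gradient `p ∈ K`; at a point
of differentiability `ℓ` itself is such a function, and `ℓ x = ⟪p, x⟫`. The maximizer `p` cannot
lie in the open set `{H < 0} ⊆ K`: there `⟪·, x⟫` would have a local maximum, forcing `x = 0`, and
then every point of `K`, which has nonempty interior, would be the gradient of `ℓ` at `0`.
-/

open scoped RealInnerProductSpace Gradient
open Filter InnerProductSpace

section SupportFunction

variable {E : Type*} [NormedAddCommGroup E] [InnerProductSpace ℝ E] [CompleteSpace E]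

theorem eq_zero_of_isLocalMax_inner {x p : E} (h : IsLocalMax (fun q => ⟪x, q⟫) p) : x = 0 :=
  (toDual ℝ E).map_eq_zero_iff.1 (h.hasFDerivAt_eq_zero (toDual ℝ E x).hasFDerivAt)

theorem gradient_eq_of_isLocalMax_sub_of_inner_le {ℓ φ : E → ℝ} {p x : E}
    (hle : ∀ y, ⟪p, y⟫ ≤ ℓ y) (heq : ⟪p, x⟫ = ℓ x) (hφ : DifferentiableAt ℝ φ x)
    (hmax : IsLocalMax (fun y => ℓ y - φ y) x) : ∇ φ x = p := by
  have hloc : IsLocalMax (fun y => ⟪p, y⟫ - φ y) x := by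
    filter_upwards [hmax] with y hy
    linarith [hle y, show ℓ y - φ y ≤ ℓ x - φ x from hy]
  have hderiv : HasFDerivAt (fun y => ⟪p, y⟫ - φ y) (toDual ℝ E p - toDual ℝ E (∇ φ x)) x :=
    (toDual ℝ E p).hasFDerivAt.sub hφ.hasGradientAt.hasFDerivAt
  exact (toDual ℝ E).injective (sub_eq_zero.1 (hloc.hasFDerivAt_eq_zero hderiv)).symm

variable {K : Set E} {ℓ : E → ℝ} {p x : E}

theorem gradient_eq_of_isLocalMax_support_sub
    (hℓ : ∀ v, IsGreatest ((fun q => ⟪q, v⟫) '' K) (ℓ v)) (hp : p ∈ K) (heq : ⟪p, x⟫ = ℓ x)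
    {φ : E → ℝ} (hφ : DifferentiableAt ℝ φ x) (hmax : IsLocalMax (fun y => ℓ y - φ y) x) :
    ∇ φ x = p :=
  gradient_eq_of_isLocalMax_sub_of_inner_le (fun y => (hℓ y).2 ⟨p, hp, rfl⟩) heq hφ hmax

theorem notMem_interior_of_support_differentiableAt [Nontrivial E]
    (hℓ : ∀ v, IsGreatest ((fun q => ⟪q, v⟫) '' K) (ℓ v)) (hdiff : DifferentiableAt ℝ ℓ x)
    (heq : ⟪p, x⟫ = ℓ x) : p ∉ interior K := by
  intro hint
  have hgrad : ∀ q ∈ K, ⟪q, x⟫ = ℓ x → ∇ ℓ x = q := fun q hq hqx =>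
    gradient_eq_of_isLocalMax_support_sub hℓ hq hqx hdiff
      (Eventually.of_forall fun y => by simp)
  have hx : x = 0 := by
    refine eq_zero_of_isLocalMax_inner (p := p) ?_
    filter_upwards [mem_interior_iff_mem_nhds.1 hint] with q hq
    simpa only [real_inner_comm x, ← heq] using (hℓ x).2 ⟨q, hq, rfl⟩
  subst hx
  have hK : K ⊆ {∇ ℓ 0} := fun q hq =>
    (hgrad q hq (by rw [← heq, inner_zero_right, inner_zero_right])).symm
  simpa [interior_singleton] using interior_mono hK hint

end SupportFunction

theorem support_function_subsolution_and_eikonal_general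
    {n : ℕ} (hn : 0 < n)
    (H ℓ : EuclideanSpace ℝ (Fin n) → ℝ)
    (hH : Continuous H)
    (hℓ : ∀ v, IsGreatest {r : ℝ | ∃ p, H p ≤ 0 ∧ ⟪p, v⟫ = r} (ℓ v)) :
    (∀ φ : EuclideanSpace ℝ (Fin n) → ℝ, ContDiff ℝ 1 φ →
        ∀ x₀, IsLocalMax (fun x => ℓ x - φ x) x₀ → H (gradient φ x₀) ≤ 0)
      ∧ ∀ x, DifferentiableAt ℝ ℓ x →
          ℓ x = ⟪gradient ℓ x, x⟫ ∧ H (gradient ℓ x) = 0 := by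
  refine ⟨fun φ hφ x₀ hmax => ?_, fun x hx => ?_⟩
  · obtain ⟨p, hp, hpx⟩ := (hℓ x₀).1
    rw [gradient_eq_of_isLocalMax_support_sub hℓ hp hpx (hφ.differentiable one_ne_zero _) hmax]
    exact hp
  · obtain ⟨p, hp, hpx⟩ := (hℓ x).1
    rw [gradient_eq_of_isLocalMax_support_sub hℓ hp hpx hx (Eventually.of_forall fun y => by simp),
      hpx]
    refine ⟨rfl, hp.antisymm (not_lt.1 fun hneg => ?_)⟩
    have : Nonempty (Fin n) := ⟨⟨0, hn⟩⟩
    exact notMem_interior_of_support_differentiableAt hℓ hx hpx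
      (interior_maximal (fun q hq => le_of_lt hq) (isOpen_lt hH continuous_const) hneg)

/-- The support function `ℓ` of `K = {p | H p ≤ 0}` is (a) a viscosity
subsolution of `H(Dℓ) = 0` on `ℝⁿ`, and (b) at every point `x` where `ℓ` is differentiable,
`ℓ x = ⟪Dℓ(x), x⟫` and `H (Dℓ x) = 0`. -/
theorem support_function_subsolution_and_eikonal
    {n : ℕ} (hn : 0 < n)
    (H ℓ : EuclideanSpace ℝ (Fin n) → ℝ)
    (hH : Continuous H) (hH0 : H 0 < 0)
    (hKcpt : IsCompact {p : EuclideanSpace ℝ (Fin n) | H p ≤ 0})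
    (hKconv : StrictConvex ℝ {p : EuclideanSpace ℝ (Fin n) | H p ≤ 0})
    (hℓ : ∀ v, IsGreatest {r : ℝ | ∃ p, H p ≤ 0 ∧ ⟪p, v⟫ = r} (ℓ v)) :
    (∀ φ : EuclideanSpace ℝ (Fin n) → ℝ, ContDiff ℝ 1 φ →
        ∀ x₀, IsLocalMax (fun x => ℓ x - φ x) x₀ → H (gradient φ x₀) ≤ 0)
      ∧ ∀ x, DifferentiableAt ℝ ℓ x →
          ℓ x = ⟪gradient ℓ x, x⟫ ∧ H (gradient ℓ x) = 0 :=
  support_function_subsolution_and_eikonal_general hn H ℓ hH hℓ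
end

section
/- Let v(x) := inf_{y∈ℝⁿ} { |y|²/2 + ℓ(x − y) }. Then v(x) = |x|²/2 for every x ∈ ℝⁿ with H(x) ≤ 0, and v(x) < |x|²/2 for every x with H(x) > 0; consequently v is a viscosity solution of H(Dv) = 0 on the open set {x ∈ ℝⁿ : H(x) > 0}. -/
open scoped RealInnerProductSpace
open Filter Topology

/-!
Completing the square, `⟪q, x⟫ - ‖q‖²/2 = ‖x‖²/2 - ‖x - q‖²/2`, shows that
`v x = sup_{q ∈ K} (⟪q, x⟫ - ‖q‖²/2) = ‖x‖²/2 - dist(x, K)²/2`, the infimum being attained at the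
projection `p` of `x` onto `K`. Since the projection is nonexpansive, `v` is differentiable with
gradient `p`. If `x ∉ K`, then `p` lies on the boundary of `K`, so `H p = 0`; at an extremum of
`v - φ` the gradient of `φ` equals `p`, and both viscosity inequalities hold with equality.
-/

section

variable {E : Type*} [NormedAddCommGroup E] [InnerProductSpace ℝ E]

section MetricProj

variable {K : Set E} {x x' p p' : E}

/-- For convex `K` this says that `p` is the nearest point of `K` to `x`
(`norm_eq_iInf_iff_real_inner_le_zero`). -/
def IsMetricProj (K : Set E) (x p : E) : Prop :=
  p ∈ K ∧ ∀ q ∈ K, ⟪x - p, q - p⟫ ≤ 0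

theorem exists_isMetricProj [CompleteSpace E] (hK : IsClosed K) (hconv : Convex ℝ K)
    (hne : K.Nonempty) (x : E) : ∃ p, IsMetricProj K x p := by
  obtain ⟨p, hp, hmin⟩ := exists_norm_eq_iInf_of_complete_convex hne hK.isComplete hconv x
  exact ⟨p, hp, (norm_eq_iInf_iff_real_inner_le_zero hconv hp).1 hmin⟩

theorem isMetricProj_self (hx : x ∈ K) : IsMetricProj K x x :=
  ⟨hx, fun q _ => by simp⟩

theorem IsMetricProj.norm_sub_sq_le_inner (h : IsMetricProj K x p) (h' : IsMetricProj K x' p') :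
    ‖p - p'‖ ^ 2 ≤ ⟪x - x', p - p'⟫ := by
  have hp := h.2 p' h'.1
  have hp' := h'.2 p h.1
  have hsplit : ⟪x - x', p - p'⟫ = ‖p - p'‖ ^ 2 - ⟪x - p, p' - p⟫ - ⟪x' - p', p - p'⟫ := by
    rw [← real_inner_self_eq_norm_sq, ← neg_sub p p', inner_neg_right]
    simp only [inner_sub_left, inner_sub_right]
    ring
  linarith

theorem IsMetricProj.norm_sub_le (h : IsMetricProj K x p) (h' : IsMetricProj K x' p') :
    ‖p - p'‖ ≤ ‖x - x'‖ := by
  have hsq : ‖p - p'‖ * ‖p - p'‖ ≤ ‖x - x'‖ * ‖p - p'‖ := by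
    rw [← sq]
    exact (h.norm_sub_sq_le_inner h').trans (real_inner_le_norm _ _)
  rcases (norm_nonneg (p - p')).eq_or_lt with h0 | hpos
  · rw [← h0]; exact norm_nonneg _
  · exact le_of_mul_le_mul_right hsq hpos

theorem IsMetricProj.eq_of_mem_interior (h : IsMetricProj K x p) (hp : p ∈ interior K) :
    x = p := by
  have hsegment : Tendsto (fun t : ℝ => p + t • (x - p)) (𝓝[>] 0) (𝓝 p) := by
    have hcont : Continuous fun t : ℝ => p + t • (x - p) := by fun_prop
    simpa using (hcont.tendsto 0).mono_left nhdsWithin_le_nhds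
  obtain ⟨t, hmem, ht⟩ :=
    ((hsegment.eventually (mem_interior_iff_mem_nhds.1 hp)).and self_mem_nhdsWithin).exists
  have hle := h.2 _ hmem
  rw [add_sub_cancel_left, real_inner_smul_right, real_inner_self_eq_norm_sq] at hle
  have : ‖x - p‖ ^ 2 ≤ 0 := nonpos_of_mul_nonpos_right hle ht
  simpa [sub_eq_zero] using this

theorem IsMetricProj.apply_eq_zero {H : E → ℝ} (hH : Continuous H)
    (h : IsMetricProj {q | H q ≤ 0} x p) (hx : 0 < H x) : H p = 0 := by
  refine le_antisymm h.1 (not_lt.1 fun hneg => hx.not_ge ?_)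
  have hint : p ∈ interior {q | H q ≤ 0} :=
    interior_maximal (fun _ hq => le_of_lt hq) (isOpen_lt hH continuous_const) hneg
  rw [h.eq_of_mem_interior hint]
  exact h.1

end MetricProj

theorem hasGradientAt_of_abs_sub_inner_le_sq [CompleteSpace E] {f : E → ℝ} {x₀ g : E}
    (h : ∀ x, |f x - f x₀ - ⟪g, x - x₀⟫| ≤ ‖x - x₀‖ ^ 2) : HasGradientAt f g x₀ := by
  rw [hasGradientAt_iff_isLittleO]
  refine (Asymptotics.IsBigO.of_bound 1 (Eventually.of_forall fun x => ?_)).trans_isLittleO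
    (Asymptotics.isLittleO_pow_sub_sub x₀ one_lt_two)
  simpa using h x

theorem IsLocalExtr.eq_of_hasGradientAt_sub [CompleteSpace E] {f φ : E → ℝ} {x a b : E}
    (hext : IsLocalExtr (fun y => f y - φ y) x) (hf : HasGradientAt f a x)
    (hφ : HasGradientAt φ b x) : a = b := by
  have hsub := (hasGradientAt_iff_hasFDerivAt.1 hf).sub (hasGradientAt_iff_hasFDerivAt.1 hφ)
  rw [← map_sub] at hsub
  exact sub_eq_zero.1 ((LinearIsometryEquiv.map_eq_zero_iff _).1 (hext.hasFDerivAt_eq_zero hsub))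

section InfConvolution

noncomputable def halfSqInfConv (ℓ : E → ℝ) (x : E) : ℝ :=
  sInf (Set.range fun y => ‖y‖ ^ 2 / 2 + ℓ (x - y))

theorem inner_sub_half_norm_sq_eq (q x : E) :
    ⟪q, x⟫ - ‖q‖ ^ 2 / 2 = ‖x‖ ^ 2 / 2 - ‖x - q‖ ^ 2 / 2 := by
  rw [norm_sub_sq_real, real_inner_comm]
  ring

variable {K : Set E} {ℓ : E → ℝ}

theorem inner_sub_half_norm_sq_le_half_norm_sq_add
    (hℓ : ∀ w, IsGreatest ((fun p => ⟪p, w⟫) '' K) (ℓ w)) {q : E} (hq : q ∈ K) (x y : E) :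
    ⟪q, x⟫ - ‖q‖ ^ 2 / 2 ≤ ‖y‖ ^ 2 / 2 + ℓ (x - y) := by
  have hsupp : ⟪q, x - y⟫ ≤ ℓ (x - y) := (hℓ (x - y)).2 ⟨q, hq, rfl⟩
  have hsq := norm_sub_sq_real y q
  rw [inner_sub_right] at hsupp
  nlinarith [sq_nonneg ‖y - q‖, real_inner_comm y q]

theorem inner_sub_half_norm_sq_le_halfSqInfConv
    (hℓ : ∀ w, IsGreatest ((fun p => ⟪p, w⟫) '' K) (ℓ w)) {q : E} (hq : q ∈ K) (x : E) :
    ⟪q, x⟫ - ‖q‖ ^ 2 / 2 ≤ halfSqInfConv ℓ x :=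
  le_csInf (Set.range_nonempty _) <| Set.forall_mem_range.2 <|
    inner_sub_half_norm_sq_le_half_norm_sq_add hℓ hq x

/-- The outward normal `x - p` at the projection `p` is maximized over `K` at `p`. -/
theorem IsMetricProj.support_eq_inner
    (hℓ : ∀ w, IsGreatest ((fun p => ⟪p, w⟫) '' K) (ℓ w)) {x p : E} (h : IsMetricProj K x p) :
    ℓ (x - p) = ⟪p, x - p⟫ := by
  obtain ⟨q, hq, hqℓ⟩ := (hℓ (x - p)).1
  refine le_antisymm ?_ ((hℓ (x - p)).2 ⟨p, h.1, rfl⟩)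
  calc ℓ (x - p) = ⟪q, x - p⟫ := hqℓ.symm
    _ ≤ ⟪p, x - p⟫ := by
      have hnormal := h.2 q hq
      rwa [real_inner_comm, inner_sub_left, sub_nonpos] at hnormal

theorem IsMetricProj.halfSqInfConv_eq
    (hℓ : ∀ w, IsGreatest ((fun p => ⟪p, w⟫) '' K) (ℓ w)) {x p : E} (h : IsMetricProj K x p) :
    halfSqInfConv ℓ x = ⟪p, x⟫ - ‖p‖ ^ 2 / 2 := by
  refine IsLeast.csInf_eq ⟨⟨p, ?_⟩, ?_⟩
  · simp only [h.support_eq_inner hℓ, inner_sub_right, real_inner_self_eq_norm_sq]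
    ring
  · rintro _ ⟨y, rfl⟩
    exact inner_sub_half_norm_sq_le_half_norm_sq_add hℓ h.1 x y

theorem IsMetricProj.halfSqInfConv_eq_sub
    (hℓ : ∀ w, IsGreatest ((fun p => ⟪p, w⟫) '' K) (ℓ w)) {x p : E} (h : IsMetricProj K x p) :
    halfSqInfConv ℓ x = ‖x‖ ^ 2 / 2 - ‖x - p‖ ^ 2 / 2 := by
  rw [h.halfSqInfConv_eq hℓ, inner_sub_half_norm_sq_eq]

theorem IsMetricProj.hasGradientAt_halfSqInfConv [CompleteSpace E]
    (hℓ : ∀ w, IsGreatest ((fun p => ⟪p, w⟫) '' K) (ℓ w)) (hK : IsClosed K) (hconv : Convex ℝ K)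
    {x₀ p₀ : E} (h₀ : IsMetricProj K x₀ p₀) : HasGradientAt (halfSqInfConv ℓ) p₀ x₀ := by
  refine hasGradientAt_of_abs_sub_inner_le_sq fun x => abs_le.2 ⟨?_, ?_⟩
  · have hlower := inner_sub_half_norm_sq_le_halfSqInfConv hℓ h₀.1 x
    rw [h₀.halfSqInfConv_eq hℓ, inner_sub_right]
    linarith [sq_nonneg ‖x - x₀‖]
  · obtain ⟨p, hp⟩ := exists_isMetricProj hK hconv ⟨p₀, h₀.1⟩ x
    have hupper := inner_sub_half_norm_sq_le_halfSqInfConv hℓ hp.1 x₀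
    have hcs : ⟪p - p₀, x - x₀⟫ ≤ ‖x - x₀‖ ^ 2 := calc
      ⟪p - p₀, x - x₀⟫ ≤ ‖p - p₀‖ * ‖x - x₀‖ := real_inner_le_norm _ _
      _ ≤ ‖x - x₀‖ * ‖x - x₀‖ := by gcongr; exact hp.norm_sub_le h₀
      _ = ‖x - x₀‖ ^ 2 := (sq _).symm
    rw [inner_sub_left, inner_sub_right, inner_sub_right] at hcs
    rw [hp.halfSqInfConv_eq hℓ, inner_sub_right]
    linarith

end InfConvolution

end

theorem inf_convolution_of_half_norm_sq_general
    {n : ℕ}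
    (H ℓ : EuclideanSpace ℝ (Fin n) → ℝ)
    (hH : Continuous H)
    (hKconv : StrictConvex ℝ {p : EuclideanSpace ℝ (Fin n) | H p ≤ 0})
    (hℓ : ∀ v, IsGreatest {r : ℝ | ∃ p, H p ≤ 0 ∧ ⟪p, v⟫ = r} (ℓ v))
    (v : EuclideanSpace ℝ (Fin n) → ℝ)
    (hv : ∀ x, v x = sInf (Set.range fun y => ‖y‖ ^ 2 / 2 + ℓ (x - y))) :
    (∀ x, H x ≤ 0 → v x = ‖x‖ ^ 2 / 2) ∧
    (∀ x, 0 < H x → v x < ‖x‖ ^ 2 / 2) ∧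
    (∀ φ : EuclideanSpace ℝ (Fin n) → ℝ, ContDiff ℝ 1 φ →
      ∀ x₀, 0 < H x₀ → IsLocalMax (fun x => v x - φ x) x₀ → H (gradient φ x₀) ≤ 0) ∧
    (∀ φ : EuclideanSpace ℝ (Fin n) → ℝ, ContDiff ℝ 1 φ →
      ∀ x₀, 0 < H x₀ → IsLocalMin (fun x => v x - φ x) x₀ → 0 ≤ H (gradient φ x₀)) := by
  obtain rfl : v = halfSqInfConv ℓ := funext hv
  set K := {p : EuclideanSpace ℝ (Fin n) | H p ≤ 0}
  have hK : IsClosed K := isClosed_le hH continuous_const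
  have hne : K.Nonempty := by
    obtain ⟨p, hp, -⟩ := (hℓ 0).1
    exact ⟨p, hp⟩
  have hproj := exists_isMetricProj hK hKconv.convex hne
  have hviscosity (φ : EuclideanSpace ℝ (Fin n) → ℝ) (hφ : ContDiff ℝ 1 φ) (x₀)
      (hx₀ : 0 < H x₀) (hext : IsLocalExtr (fun x => halfSqInfConv ℓ x - φ x) x₀) :
      H (gradient φ x₀) = 0 := by
    obtain ⟨p₀, hp₀⟩ := hproj x₀
    have hgrad : p₀ = gradient φ x₀ :=
      hext.eq_of_hasGradientAt_sub (hp₀.hasGradientAt_halfSqInfConv hℓ hK hKconv.convex)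
        (hφ.differentiable one_ne_zero).differentiableAt.hasGradientAt
    rw [← hgrad, hp₀.apply_eq_zero hH hx₀]
  refine ⟨fun x hx => ?_, fun x hx => ?_, fun φ hφ x₀ hx₀ hmax => ?_, fun φ hφ x₀ hx₀ hmin => ?_⟩
  · rw [(isMetricProj_self (K := K) hx).halfSqInfConv_eq_sub hℓ, sub_self, norm_zero]
    ring
  · obtain ⟨p, hp⟩ := hproj x
    have hxp : 0 < ‖x - p‖ := norm_pos_iff.2 <| sub_ne_zero.2 fun h => hx.not_ge (h ▸ hp.1)
    rw [hp.halfSqInfConv_eq_sub hℓ]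
    linarith [pow_pos hxp 2]
  · exact (hviscosity φ hφ x₀ hx₀ hmax.isExtr).le
  · exact (hviscosity φ hφ x₀ hx₀ hmin.isExtr).ge

/-- For `v x = inf_y (|y|²/2 + ℓ (x - y))`, one has `v x = |x|²/2`
whenever `H x ≤ 0`, `v x < |x|²/2` whenever `H x > 0`, and `v` is a viscosity solution of
`H(Dv) = 0` on the open set `{x | H x > 0}`. -/
theorem inf_convolution_of_half_norm_sq
    {n : ℕ} (hn : 0 < n)
    (H ℓ : EuclideanSpace ℝ (Fin n) → ℝ)
    (hH : Continuous H) (hH0 : H 0 < 0)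
    (hKcpt : IsCompact {p : EuclideanSpace ℝ (Fin n) | H p ≤ 0})
    (hKconv : StrictConvex ℝ {p : EuclideanSpace ℝ (Fin n) | H p ≤ 0})
    (hℓ : ∀ v, IsGreatest {r : ℝ | ∃ p, H p ≤ 0 ∧ ⟪p, v⟫ = r} (ℓ v))
    (v : EuclideanSpace ℝ (Fin n) → ℝ)
    (hv : ∀ x, v x = sInf (Set.range fun y => ‖y‖ ^ 2 / 2 + ℓ (x - y))) :
    (∀ x, H x ≤ 0 → v x = ‖x‖ ^ 2 / 2) ∧
    (∀ x, 0 < H x → v x < ‖x‖ ^ 2 / 2) ∧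
    (∀ φ : EuclideanSpace ℝ (Fin n) → ℝ, ContDiff ℝ 1 φ →
      ∀ x₀, 0 < H x₀ → IsLocalMax (fun x => v x - φ x) x₀ → H (gradient φ x₀) ≤ 0) ∧
    (∀ φ : EuclideanSpace ℝ (Fin n) → ℝ, ContDiff ℝ 1 φ →
      ∀ x₀, 0 < H x₀ → IsLocalMin (fun x => v x - φ x) x₀ → 0 ≤ H (gradient φ x₀)) :=
  inf_convolution_of_half_norm_sq_general H ℓ hH hKconv hℓ v hv
end
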